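/- arXiv:2504.04117 — 8 statements merged into one kernel-verified Lean document; each statement's English description precedes it below -/
import Mathlib

section
/- Let X be a normed space, f : X → ℝ be 1-Lipschitz, x, v ∈ X, and suppose there exist functionals y*, z* ∈ D_f(x) (the set of derivative-like operators of f at x) with z*(v) < 0 < y*(v). Then the Dini subgradient of f at x is empty. -/
open Filter Metric Topology

lemma aux {X : Type*} [NormedAddCommGroup X] [NormedSpace ℝ X]
    (f : X → ℝ) (hf : LipschitzWith 1 f) (x w : X) (hw : w ≠ 0)
    (T : X →L[ℝ] ℝ)
    (hT : Filter.liminf (fun r : ℝ =>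
        sSup ((fun u : X => |f (x + u) - f x - T u| / r) '' closedBall (0 : X) r))
        (𝓝[>] (0 : ℝ)) = 0) :
    Filter.liminf (fun t : ℝ => (f (x + t • w) - f x) / t) (𝓝[>] (0 : ℝ)) ≤ T w := by
  have hwpos : (0 : ℝ) < ‖w‖ := norm_pos_iff.mpr hw
  -- the quotient is bounded below (and above) by ‖w‖ for t > 0
  have hquot : ∀ t : ℝ, 0 < t → |(f (x + t • w) - f x) / t| ≤ ‖w‖ := by
    intro t ht
    rw [abs_div, abs_of_pos ht, div_le_iff₀ ht]
    have := hf.dist_le_mul (x + t • w) x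
    simp only [NNReal.coe_one, one_mul] at this
    calc |f (x + t • w) - f x| = dist (f (x + t • w)) (f x) := by rw [Real.dist_eq]
      _ ≤ dist (x + t • w) x := this
      _ = ‖t • w‖ := by rw [dist_eq_norm, add_sub_cancel_left]
      _ = ‖w‖ * t := by rw [norm_smul, Real.norm_eq_abs, abs_of_pos ht]; ring
  have hub : ∀ r : ℝ, 0 < r → ∀ y ∈ (fun u : X => |f (x + u) - f x - T u| / r) ''
      closedBall (0 : X) r, y ≤ 1 + ‖T‖ := by
    intro r hr y hy
    obtain ⟨u, hu, rfl⟩ := hy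
    rw [mem_closedBall, dist_zero_right] at hu
    have h1 : |f (x + u) - f x| ≤ ‖u‖ := by
      have := hf.dist_le_mul (x + u) x
      simp only [NNReal.coe_one, one_mul, Real.dist_eq, dist_eq_norm,
        add_sub_cancel_left] at this
      exact this
    have h2 : |T u| ≤ ‖T‖ * ‖u‖ := T.le_opNorm u
    rw [div_le_iff₀ hr]
    calc |f (x + u) - f x - T u| ≤ |f (x + u) - f x| + |T u| := abs_sub _ _
      _ ≤ ‖u‖ + ‖T‖ * ‖u‖ := add_le_add h1 h2
      _ = (1 + ‖T‖) * ‖u‖ := by ring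
      _ ≤ (1 + ‖T‖) * r := by
          apply mul_le_mul_of_nonneg_left hu
          positivity
  have hbdd : IsBoundedUnder (· ≥ ·) (𝓝[>] (0:ℝ))
      (fun t : ℝ => (f (x + t • w) - f x) / t) :=
    isBoundedUnder_of_eventually_ge (a := -‖w‖)
      (by filter_upwards [self_mem_nhdsWithin] with t ht
          exact neg_le_of_abs_le (hquot t ht))
  refine le_of_forall_pos_le_add fun ε hε => ?_
  set δ := ε / ‖w‖ with hδ
  have hδpos : 0 < δ := div_pos hε hwpos
  -- liminf = 0 < δ, and the sSup function is eventually ≥ 0, so frequently sSup < δ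
  have hS0 : ∀ᶠ r in 𝓝[>] (0:ℝ), (0:ℝ) ≤
      sSup ((fun u : X => |f (x + u) - f x - T u| / r) '' closedBall (0 : X) r) := by
    filter_upwards [self_mem_nhdsWithin] with r hr
    apply Real.sSup_nonneg
    rintro y ⟨u, -, rfl⟩
    exact div_nonneg (abs_nonneg _) (le_of_lt hr)
  have hfreq : ∃ᶠ r in 𝓝[>] (0:ℝ),
      sSup ((fun u : X => |f (x + u) - f x - T u| / r) '' closedBall (0 : X) r) < δ := by
    apply frequently_lt_of_liminf_lt
    · refine IsBoundedUnder.isCoboundedUnder_ge (isBoundedUnder_of_eventually_le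
        (a := 1 + ‖T‖) ?_)
      filter_upwards [self_mem_nhdsWithin] with r hr
      exact Real.sSup_le (hub r hr) (by positivity)
    · rw [hT]; exact hδpos
  -- transfer: for such r, taking t = r / ‖w‖ gives quotient < T w + ε
  have key : ∃ᶠ t in 𝓝[>] (0:ℝ), (f (x + t • w) - f x) / t ≤ T w + ε := by
    have hmap : Tendsto (fun r : ℝ => r / ‖w‖) (𝓝[>] (0:ℝ)) (𝓝[>] (0:ℝ)) := by
      apply tendsto_nhdsWithin_of_tendsto_nhds_of_eventually_within
      · have : Tendsto (fun r : ℝ => r / ‖w‖) (𝓝 (0:ℝ)) (𝓝 (0 / ‖w‖)) :=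
          (tendsto_id.div_const _)
        simpa using this.mono_left nhdsWithin_le_nhds
      · filter_upwards [self_mem_nhdsWithin] with r hr
        exact div_pos hr hwpos
    refine hmap.frequently (hfreq.mp ?_)
    filter_upwards [self_mem_nhdsWithin] with r hr hS
    set t := r / ‖w‖ with htdef
    have htpos : 0 < t := div_pos hr hwpos
    have htw : t * ‖w‖ = r := div_mul_cancel₀ r (ne_of_gt hwpos)
    have hmem : t • w ∈ closedBall (0 : X) r := by
      rw [mem_closedBall, dist_zero_right, norm_smul, Real.norm_eq_abs, abs_of_pos htpos, htw]
    have hBdd : BddAbove ((fun u : X => |f (x + u) - f x - T u| / r) '' closedBall (0 : X) r) :=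
      ⟨1 + ‖T‖, fun y hy => hub r hr y hy⟩
    have hle : |f (x + t • w) - f x - T (t • w)| / r ≤
        sSup ((fun u : X => |f (x + u) - f x - T u| / r) '' closedBall (0 : X) r) :=
      le_csSup hBdd ⟨t • w, hmem, rfl⟩
    have herr : |f (x + t • w) - f x - T (t • w)| < δ * r := by
      have h := lt_of_le_of_lt hle hS
      rw [div_lt_iff₀ hr] at h
      linarith
    have hTw : T (t • w) = t * T w := by simp
    have : (f (x + t • w) - f x) / t ≤ T w + δ * ‖w‖ := by
      rw [div_le_iff₀ htpos]
      have h1 : f (x + t • w) - f x ≤ T (t • w) + δ * r := by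
        have := abs_lt.mp herr
        linarith [this.2]
      rw [hTw] at h1
      calc f (x + t • w) - f x ≤ t * T w + δ * r := h1
        _ = t * T w + δ * (t * ‖w‖) := by rw [htw]
        _ = (T w + δ * ‖w‖) * t := by ring
    have hδw : δ * ‖w‖ = ε := div_mul_cancel₀ ε (ne_of_gt hwpos)
    rwa [hδw] at this
  exact liminf_le_of_frequently_le key hbdd

/-- If two derivative-like functionals of a `1`-Lipschitz function `f` at `x` take opposite
signs at some vector `v`, then the Dini subgradient of `f` at `x` is empty. -/
theorem stmt1 {X : Type*} [NormedAddCommGroup X] [NormedSpace ℝ X]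
    (f : X → ℝ) (hf : LipschitzWith 1 f) (x v : X)
    (ystar zstar : X →L[ℝ] ℝ)
    (hy : Filter.liminf (fun r : ℝ =>
        sSup ((fun u : X => |f (x + u) - f x - ystar u| / r) '' closedBall (0 : X) r))
        (𝓝[>] (0 : ℝ)) = 0)
    (hz : Filter.liminf (fun r : ℝ =>
        sSup ((fun u : X => |f (x + u) - f x - zstar u| / r) '' closedBall (0 : X) r))
        (𝓝[>] (0 : ℝ)) = 0)
    (hzv : zstar v < 0) (hyv : 0 < ystar v) :
    {xstar : X →L[ℝ] ℝ | ∀ w : X,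
        (xstar w : ℝ) ≤ Filter.liminf (fun t : ℝ => (f (x + t • w) - f x) / t) (𝓝[>] (0 : ℝ))}
      = ∅ := by
  ext xstar
  simp only [Set.mem_setOf_eq, Set.mem_empty_iff_false, iff_false]
  intro h
  have hv : v ≠ 0 := by
    rintro rfl
    simp at hzv
  have h1 : (xstar v : ℝ) ≤ zstar v := (h v).trans (aux f hf x v hv zstar hz)
  have h2 : (xstar (-v) : ℝ) ≤ ystar (-v) :=
    (h (-v)).trans (aux f hf x (-v) (neg_ne_zero.mpr hv) ystar hy)
  simp only [map_neg] at h2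
  linarith
end

section
/- Let X and Z be normed spaces, 0 < a < b, and f₁, f₂ : X → Z Lipschitz mappings with Lip(f₁) + Lip(f₂) ≤ 1 and f₁(0) = f₂(0) = 0. Then the mapping Φ : X → Z defined by Φ(x) = f₁(x) if ‖x‖ ≤ a, Φ(x) = ((b−‖x‖)/(b−a)) f₁(x) + (b(‖x‖−a)/(‖x‖(b−a))) f₂(x) if a < ‖x‖ < b, and Φ(x) = f₂(x) if ‖x‖ ≥ b, is Lipschitz with constant at most 1 + a/(b−a), and agrees with f₁ on the closed ball of radius a and with f₂ outside the open ball of radius b. -/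
open scoped NNReal

/-!
Write `Φ x = α ‖x‖ • f₁ x + β ‖x‖ • f₂ x` with weights `α` (nonincreasing from `1` to `0`)
and `β` (nondecreasing from `0` to `1`). For `‖x‖ ≤ ‖y‖`, splitting
`α ‖x‖ • f₁ x - α ‖y‖ • f₁ y = α ‖y‖ • (f₁ x - f₁ y) + (α ‖x‖ - α ‖y‖) • f₁ x` (and the `f₂`-part
with the roles of `x` and `y` exchanged) and using `‖fᵢ z‖ ≤ Kᵢ ‖z‖` bounds the `fᵢ`-part by `Kᵢ`
times a scalar expression in `‖x‖`, `‖y‖`, `‖x - y‖`. Each scalar expression is at most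
`b / (b - a) * ‖x - y‖` (an elementary inequality, checked case by case on the position of
`‖x‖ ≤ ‖y‖` relative to `a < b`), and `K₁ + K₂ ≤ 1` gives the constant
`b / (b - a) = 1 + a / (b - a)`.
-/

section

variable {X Z : Type*} [SeminormedAddCommGroup X] [SeminormedAddCommGroup Z] [NormedSpace ℝ Z]

theorem LipschitzWith.norm_smul_sub_smul_le {f : X → Z} {K : ℝ≥0} (hf : LipschitzWith K f)
    (hf0 : f 0 = 0) (c₁ c₂ : ℝ) (x y : X) :
    ‖c₁ • f x - c₂ • f y‖ ≤ K * (|c₂| * ‖x - y‖ + |c₁ - c₂| * ‖x‖) :=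
  calc ‖c₁ • f x - c₂ • f y‖ = ‖c₂ • (f x - f y) + (c₁ - c₂) • f x‖ := by congr 1; module
    _ ≤ |c₂| * ‖f x - f y‖ + |c₁ - c₂| * ‖f x‖ := by
        simpa only [norm_smul, Real.norm_eq_abs] using
          norm_add_le (c₂ • (f x - f y)) ((c₁ - c₂) • f x)
    _ ≤ |c₂| * (K * ‖x - y‖) + |c₁ - c₂| * (K * ‖x‖) := by
        gcongr
        exacts [hf.norm_sub_le x y, hf.norm_le_mul hf0 x]
    _ = K * (|c₂| * ‖x - y‖ + |c₁ - c₂| * ‖x‖) := by ring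

theorem lipschitzWith_radial_weighted_add {α β : ℝ → ℝ} {L : ℝ≥0} {f₁ f₂ : X → Z}
    {K₁ K₂ : ℝ≥0} (hα₀ : ∀ r, 0 ≤ α r) (hα : Antitone α) (hβ₀ : ∀ r, 0 ≤ β r) (hβ : Monotone β)
    (hαL : ∀ s u d, s ≤ u → u - s ≤ d → α u * d + (α s - α u) * s ≤ L * d)
    (hβL : ∀ s u d, 0 ≤ s → s ≤ u → u - s ≤ d → β s * d + (β u - β s) * u ≤ L * d)
    (hf₁ : LipschitzWith K₁ f₁) (hf₂ : LipschitzWith K₂ f₂) (hK : (K₁ : ℝ) + K₂ ≤ 1)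
    (h₁0 : f₁ 0 = 0) (h₂0 : f₂ 0 = 0) :
    LipschitzWith L (fun x => α ‖x‖ • f₁ x + β ‖x‖ • f₂ x) := by
  refine LipschitzWith.of_dist_le_mul fun x y => ?_
  wlog hxy : ‖x‖ ≤ ‖y‖ generalizing x y
  · rw [dist_comm, dist_comm x]
    exact this y x (le_of_not_ge hxy)
  rw [dist_eq_norm, dist_eq_norm]
  have hd : ‖y‖ - ‖x‖ ≤ ‖x - y‖ := by
    simpa only [norm_sub_rev y x] using norm_sub_norm_le y x
  have h₁ : ‖α ‖x‖ • f₁ x - α ‖y‖ • f₁ y‖ ≤ K₁ * (L * ‖x - y‖) := by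
    refine (hf₁.norm_smul_sub_smul_le h₁0 _ _ x y).trans ?_
    rw [abs_of_nonneg (hα₀ _), abs_of_nonneg (sub_nonneg.2 (hα hxy))]
    gcongr
    exact hαL _ _ _ hxy hd
  have h₂ : ‖β ‖x‖ • f₂ x - β ‖y‖ • f₂ y‖ ≤ K₂ * (L * ‖x - y‖) := by
    rw [norm_sub_rev]
    refine (hf₂.norm_smul_sub_smul_le h₂0 _ _ y x).trans ?_
    rw [norm_sub_rev y x, abs_of_nonneg (hβ₀ _), abs_of_nonneg (sub_nonneg.2 (hβ hxy))]
    gcongr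
    exact hβL _ _ _ (norm_nonneg x) hxy hd
  calc ‖(α ‖x‖ • f₁ x + β ‖x‖ • f₂ x) - (α ‖y‖ • f₁ y + β ‖y‖ • f₂ y)‖
      = ‖(α ‖x‖ • f₁ x - α ‖y‖ • f₁ y) + (β ‖x‖ • f₂ x - β ‖y‖ • f₂ y)‖ := by
        congr 1; abel
    _ ≤ K₁ * (L * ‖x - y‖) + K₂ * (L * ‖x - y‖) := (norm_add_le _ _).trans (add_le_add h₁ h₂)
    _ = (K₁ + K₂) * (L * ‖x - y‖) := by ring
    _ ≤ L * ‖x - y‖ := mul_le_of_le_one_left (by positivity) hK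

end

namespace RadialInterpolation

variable (a b : ℝ)

noncomputable def innerWeight (r : ℝ) : ℝ :=
  if r ≤ a then 1 else if r < b then (b - r) / (b - a) else 0

noncomputable def outerWeight (r : ℝ) : ℝ :=
  if r ≤ a then 0 else if r < b then b * (r - a) / (r * (b - a)) else 1

variable {a b}

theorem innerWeight_nonneg (hab : a < b) (r : ℝ) : 0 ≤ innerWeight a b r := by
  unfold innerWeight
  split_ifs <;> positivity

theorem innerWeight_antitone (hab : a < b) : Antitone (innerWeight a b) := by
  have hba : 0 < b - a := sub_pos.2 hab
  intro s u hsu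
  unfold innerWeight
  split_ifs <;> (try field_simp) <;> linarith

theorem outerWeight_nonneg (ha : 0 < a) (hab : a < b) (r : ℝ) : 0 ≤ outerWeight a b r := by
  have hb : 0 < b := ha.trans hab
  unfold outerWeight
  split_ifs with hra
  · exact le_rfl
  · have har : a < r := not_le.1 hra
    have hr : 0 < r := ha.trans har
    positivity
  · exact zero_le_one

theorem outerWeight_monotone (ha : 0 < a) (hab : a < b) : Monotone (outerWeight a b) := by
  have hba : 0 < b - a := sub_pos.2 hab
  intro s u hsu
  unfold outerWeight
  -- wherever the annulus formula occurs, positivity of its denominator lets `field_simp` clear it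
  split_ifs <;> (try have : 0 < u := by linarith) <;> (try have : 0 < s := by linarith) <;>
    (try field_simp) <;> nlinarith [mul_le_mul_of_nonneg_left hsu (mul_pos ha (ha.trans hab)).le]

theorem innerWeight_bound (ha : 0 < a) (hab : a < b) {s u d : ℝ} (hsu : s ≤ u)
    (hd : u - s ≤ d) :
    innerWeight a b u * d + (innerWeight a b s - innerWeight a b u) * s ≤ b / (b - a) * d := by
  have hba : 0 < b - a := sub_pos.2 hab
  rw [div_mul_eq_mul_div, le_div_iff₀ hba]
  unfold innerWeight
  split_ifs <;> field_simp <;> nlinarith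

theorem outerWeight_bound (ha : 0 < a) (hab : a < b) {s u d : ℝ} (hs : 0 ≤ s) (hsu : s ≤ u)
    (hd : u - s ≤ d) :
    outerWeight a b s * d + (outerWeight a b u - outerWeight a b s) * u ≤ b / (b - a) * d := by
  have hba : 0 < b - a := sub_pos.2 hab
  have had : a * (u - s) ≤ a * d := mul_le_mul_of_nonneg_left hd ha.le
  rw [div_mul_eq_mul_div, le_div_iff₀ hba]
  unfold outerWeight
  split_ifs <;> (try have : 0 < u := by linarith) <;> (try have : 0 < s := by linarith) <;>
    (try field_simp) <;> nlinarith [mul_nonneg ha.le hs]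

end RadialInterpolation

open RadialInterpolation

/-- The interpolation `Φ` between `f₁` (inside radius `a`) and `f₂` (outside radius `b`)
is Lipschitz with constant at most `1 + a/(b-a)`, agrees with `f₁` on the closed ball of
radius `a` and with `f₂` outside the open ball of radius `b`. -/
theorem stmt2 {X Z : Type*} [NormedAddCommGroup X] [NormedSpace ℝ X]
    [NormedAddCommGroup Z] [NormedSpace ℝ Z]
    (a b : ℝ) (ha : 0 < a) (hab : a < b)
    (f₁ f₂ : X → Z) (K₁ K₂ : NNReal)
    (hf₁ : LipschitzWith K₁ f₁) (hf₂ : LipschitzWith K₂ f₂)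
    (hK : (K₁ : ℝ) + K₂ ≤ 1) (h₁0 : f₁ 0 = 0) (h₂0 : f₂ 0 = 0) :
    LipschitzWith (Real.toNNReal (1 + a / (b - a)))
      (fun x : X => if ‖x‖ ≤ a then f₁ x
        else if ‖x‖ < b then
          ((b - ‖x‖) / (b - a)) • f₁ x + ((b * (‖x‖ - a)) / (‖x‖ * (b - a))) • f₂ x
        else f₂ x) ∧
    (∀ x : X, ‖x‖ ≤ a →
      (if ‖x‖ ≤ a then f₁ x
        else if ‖x‖ < b then
          ((b - ‖x‖) / (b - a)) • f₁ x + ((b * (‖x‖ - a)) / (‖x‖ * (b - a))) • f₂ x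
        else f₂ x) = f₁ x) ∧
    (∀ x : X, b ≤ ‖x‖ →
      (if ‖x‖ ≤ a then f₁ x
        else if ‖x‖ < b then
          ((b - ‖x‖) / (b - a)) • f₁ x + ((b * (‖x‖ - a)) / (‖x‖ * (b - a))) • f₂ x
        else f₂ x) = f₂ x) := by
  have hba : 0 < b - a := sub_pos.2 hab
  have hΦ : (fun x : X => if ‖x‖ ≤ a then f₁ x
        else if ‖x‖ < b then
          ((b - ‖x‖) / (b - a)) • f₁ x + ((b * (‖x‖ - a)) / (‖x‖ * (b - a))) • f₂ x
        else f₂ x) = fun x => innerWeight a b ‖x‖ • f₁ x + outerWeight a b ‖x‖ • f₂ x := by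
    funext x
    unfold innerWeight outerWeight
    split_ifs <;> simp
  have hL : ((b / (b - a)).toNNReal : ℝ) = b / (b - a) :=
    Real.coe_toNNReal _ (div_nonneg (ha.trans hab).le hba.le)
  refine ⟨?_, fun x hx => if_pos hx, fun x hx => ?_⟩
  · rw [hΦ, show 1 + a / (b - a) = b / (b - a) by field_simp; ring]
    refine lipschitzWith_radial_weighted_add (innerWeight_nonneg hab) (innerWeight_antitone hab)
      (outerWeight_nonneg ha hab) (outerWeight_monotone ha hab) (fun s u d hsu hd => ?_)
      (fun s u d hs hsu hd => ?_) hf₁ hf₂ hK h₁0 h₂0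
    · rw [hL]; exact innerWeight_bound ha hab hsu hd
    · rw [hL]; exact outerWeight_bound ha hab hs hsu hd
  · rw [if_neg (by linarith), if_neg (not_lt.2 hx)]
end

section
/- Let X and Z be normed spaces, 0 < a < b, f₂ : X → Z Lipschitz with Lip(f₂) ≤ 1 and f₂(0) = 0, and define Φ(x) = 0 for ‖x‖ ≤ a, Φ(x) = (b(‖x‖−a)/(‖x‖(b−a))) f₂(x) for a < ‖x‖ < b, and Φ(x) = f₂(x) for ‖x‖ ≥ b. Then ‖Φ(x) − f₂(x)‖ ≤ a · Lip(f₂) for every x ∈ X. -/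
/-- If `f₁ = 0`, the interpolation `Φ` satisfies `‖Φ x - f₂ x‖ ≤ a · Lip(f₂)` everywhere. -/
theorem stmt3 {X Z : Type*} [NormedAddCommGroup X] [NormedSpace ℝ X]
    [NormedAddCommGroup Z] [NormedSpace ℝ Z]
    (a b : ℝ) (ha : 0 < a) (hab : a < b)
    (f₂ : X → Z) (K₂ : NNReal) (hf₂ : LipschitzWith K₂ f₂)
    (hK : (K₂ : ℝ) ≤ 1) (h₂0 : f₂ 0 = 0) :
    ∀ x : X,
      ‖(if ‖x‖ ≤ a then (0 : Z)
          else if ‖x‖ < b then ((b * (‖x‖ - a)) / (‖x‖ * (b - a))) • f₂ x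
          else f₂ x) - f₂ x‖ ≤ a * K₂ := by
  intro x
  have hK0 : (0:ℝ) ≤ K₂ := K₂.coe_nonneg
  have hfx : ‖f₂ x‖ ≤ K₂ * ‖x‖ := by
    have := hf₂.dist_le_mul x 0
    simpa [h₂0, dist_eq_norm] using this
  by_cases h1 : ‖x‖ ≤ a
  · rw [if_pos h1, zero_sub, norm_neg]
    calc ‖f₂ x‖ ≤ K₂ * ‖x‖ := hfx
      _ ≤ K₂ * a := by nlinarith
      _ = a * K₂ := mul_comm _ _
  · push_neg at h1
    rw [if_neg (not_le.2 h1)]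
    by_cases h2 : ‖x‖ < b
    · rw [if_pos h2]
      set d := ‖x‖ with hd
      have hd0 : 0 < d := ha.trans h1
      have hba : 0 < b - a := sub_pos.2 hab
      have key : ((b * (d - a)) / (d * (b - a))) • f₂ x - f₂ x
          = ((b * (d - a)) / (d * (b - a)) - 1) • f₂ x := by
        rw [sub_smul, one_smul]
      rw [key, norm_smul]
      have habs : |(b * (d - a)) / (d * (b - a)) - 1| = a * (b - d) / (d * (b - a)) := by
        have : (b * (d - a)) / (d * (b - a)) - 1 = -(a * (b - d) / (d * (b - a))) := by
          field_simp
          ring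
        rw [this, abs_neg, abs_of_nonneg]
        apply div_nonneg (by nlinarith) (by positivity)
      rw [Real.norm_eq_abs, habs]
      calc a * (b - d) / (d * (b - a)) * ‖f₂ x‖
          ≤ a * (b - d) / (d * (b - a)) * (K₂ * d) := by
            apply mul_le_mul_of_nonneg_left hfx
            apply div_nonneg (by nlinarith) (by positivity)
        _ ≤ a * K₂ := by
            rw [div_mul_eq_mul_div, div_le_iff₀ (by positivity)]
            nlinarith [mul_nonneg (mul_nonneg (mul_nonneg ha.le hK0) hd0.le)
              (by linarith : (0:ℝ) ≤ d - a)]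
    · rw [if_neg h2]
      simp
      positivity
end

section
/- Let X and Y be normed spaces with X finite-dimensional, H ⊆ X open, f, g : H → Y locally Lipschitz, and A := {x ∈ H : f(x) = g(x)}. If x is a Lebesgue density point of A, then f is Fréchet differentiable at x if and only if g is Fréchet differentiable at x, and in that case Df(x) = Dg(x). -/
open Filter Metric Topology MeasureTheory ENNReal NNReal Asymptotics

/-! The difference `h = f - g` is Lipschitz near `x` and vanishes on `A`. If `‖h y‖` were
not `o(‖y - x‖)`, there would be points `y → x` with a ball of radius `δ‖y - x‖` around `y`
missing `A`; that ball fills a fixed proportion `(δ / (1 + δ))ⁿ` of the ball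
`closedBall x ((1 + δ)‖y - x‖)`, so the density of `A` at `x` could not tend to `1`.
Hence `h` has derivative `0` at `x`, and `f = g + h` and `g` have the same derivatives there. -/

section DensityPoint

variable {X : Type*} [MeasurableSpace X] [PseudoMetricSpace X]

def IsDensityPoint (μ : Measure X) (A : Set X) (x : X) : Prop :=
  Tendsto (fun r : ℝ => μ (A ∩ closedBall x r) / μ (closedBall x r)) (𝓝[>] 0) (𝓝 1)

variable {μ : Measure X} {A U : Set X} {x : X}

theorem IsDensityPoint.inter_of_mem_nhds (hA : IsDensityPoint μ A x) (hU : U ∈ 𝓝 x) :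
    IsDensityPoint μ (A ∩ U) x := by
  obtain ⟨ε, hε, hεU⟩ := nhds_basis_closedBall.mem_iff.mp hU
  refine hA.congr' ?_
  filter_upwards [Ioo_mem_nhdsGT hε] with r hr
  rw [Set.inter_right_comm, Set.inter_assoc,
    Set.inter_eq_left.mpr ((closedBall_subset_closedBall hr.2.le).trans hεU)]

theorem IsDensityPoint.mem_closure (hA : IsDensityPoint μ A x) : x ∈ closure A := by
  refine Metric.mem_closure_iff.mpr fun ε hε => ?_
  have hpos : ∀ᶠ r in 𝓝[>] (0 : ℝ),
      0 < μ (A ∩ closedBall x r) / μ (closedBall x r) ∧ r < ε :=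
    (hA.eventually (eventually_gt_nhds zero_lt_one)).and
      ((eventually_lt_nhds hε).filter_mono nhdsWithin_le_nhds)
  obtain ⟨r, hr, hrε⟩ := hpos.exists
  obtain ⟨a, haA, hax⟩ := nonempty_of_measure_ne_zero (ENNReal.div_pos_iff.mp hr).1
  exact ⟨a, haA, (dist_comm x a ▸ mem_closedBall.mp hax).trans_lt hrε⟩

end DensityPoint

section AddHaar

variable {X : Type*} [NormedAddCommGroup X] [NormedSpace ℝ X] [FiniteDimensional ℝ X]
  [MeasurableSpace X] [BorelSpace X] {μ : Measure X} [μ.IsAddHaarMeasure] {A : Set X} {x : X}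

theorem measure_inter_closedBall_div_le_of_disjoint {y : X} {s r : ℝ} (hs : 0 < s)
    (hsub : closedBall y (s * r) ⊆ closedBall x r) (hdisj : Disjoint A (closedBall y (s * r))) :
    μ (A ∩ closedBall x r) / μ (closedBall x r) ≤
      1 - ENNReal.ofReal (s ^ Module.finrank ℝ X) := by
  have hsmall : μ (closedBall y (s * r)) =
      ENNReal.ofReal (s ^ Module.finrank ℝ X) * μ (closedBall x r) := by
    rw [Measure.addHaar_closedBall_mul_of_pos μ y hs, Measure.addHaar_closedBall_center μ x]
  refine ENNReal.div_le_of_le_mul ?_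
  calc μ (A ∩ closedBall x r)
      ≤ μ (closedBall x r \ closedBall y (s * r)) :=
        measure_mono fun a ha => ⟨ha.2, hdisj.notMem_of_mem_left ha.1⟩
    _ = μ (closedBall x r) - μ (closedBall y (s * r)) :=
        measure_sdiff hsub measurableSet_closedBall.nullMeasurableSet measure_closedBall_lt_top.ne
    _ = (1 - ENNReal.ofReal (s ^ Module.finrank ℝ X)) * μ (closedBall x r) := by
        rw [ENNReal.sub_mul fun _ _ => measure_closedBall_lt_top.ne, one_mul, hsmall]

theorem IsDensityPoint.eventually_exists_dist_le (hA : IsDensityPoint μ A x) {δ : ℝ}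
    (hδ : 0 < δ) :
    ∀ᶠ y in 𝓝[≠] x, ∃ a ∈ A, dist y a ≤ δ * dist y x := by
  set s := δ / (1 + δ)
  have hs : 0 < s := by positivity
  have hgap : (1 : ℝ≥0∞) - ENNReal.ofReal (s ^ Module.finrank ℝ X) < 1 :=
    ENNReal.sub_lt_self one_ne_top one_ne_zero (ENNReal.ofReal_pos.mpr (by positivity)).ne'
  have hradius : Tendsto (fun y => (1 + δ) * dist y x) (𝓝[≠] x) (𝓝[>] 0) := by
    refine tendsto_nhdsWithin_of_tendsto_nhds_of_eventually_within _ ?_ ?_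
    · simpa using (((continuous_id.dist continuous_const).tendsto' x 0 (dist_self x)).const_mul
        (1 + δ)).mono_left nhdsWithin_le_nhds
    · filter_upwards [self_mem_nhdsWithin] with y hy
      exact mul_pos (by positivity) (dist_pos.mpr hy)
  filter_upwards [hradius.eventually (hA.eventually (eventually_gt_nhds hgap))] with y hy
  by_contra! hfar
  have hsr : s * ((1 + δ) * dist y x) = δ * dist y x := by
    simp only [s]
    field_simp
  refine (measure_inter_closedBall_div_le_of_disjoint (y := y) hs ?_ ?_).not_gt hy
  · rw [hsr]
    refine closedBall_subset_closedBall' ?_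
    linarith
  · rw [hsr]
    exact Set.disjoint_left.mpr fun a ha hay =>
      (hfar a ha).not_ge (dist_comm y a ▸ mem_closedBall.mp hay)

theorem LipschitzOnWith.hasFDerivAt_zero_of_isDensityPoint {Y : Type*} [NormedAddCommGroup Y]
    [NormedSpace ℝ Y] {h : X → Y} {K : ℝ≥0} {U : Set X} (hh : LipschitzOnWith K h U)
    (hU : U ∈ 𝓝 x) (hA : IsDensityPoint μ A x) (h0 : Set.EqOn h 0 (A ∩ U)) :
    HasFDerivAt h (0 : X →L[ℝ] Y) x := by
  have hAU := hA.inter_of_mem_nhds hU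
  have hx0 : h x = 0 := by
    have hx := (hh.continuousOn.continuousAt hU).continuousWithinAt.mem_closure_image
      hAU.mem_closure
    have himage : h '' (A ∩ U) ⊆ {0} := by
      rintro _ ⟨a, ha, rfl⟩
      exact h0 ha
    simpa using closure_mono himage hx
  rw [hasFDerivAt_iff_isLittleO]
  simp only [hx0, sub_zero, zero_apply]
  refine isLittleO_iff.mpr fun c hc => ?_
  set δ := c / (K + 1)
  have hKδ : K * δ ≤ c := by
    rw [mul_div_assoc', div_le_iff₀ (by positivity)]
    nlinarith
  have hnear := hAU.eventually_exists_dist_le (δ := δ) (by positivity)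
  rw [eventually_nhdsWithin_iff] at hnear
  filter_upwards [hnear, hU] with y hy hyU
  rcases eq_or_ne y x with rfl | hyx
  · simp [hx0]
  obtain ⟨a, ha, hya⟩ := hy hyx
  calc ‖h y‖ = dist (h y) (h a) := by rw [h0 ha, Pi.zero_apply, dist_zero_right]
    _ ≤ K * dist y a := hh.dist_le_mul y hyU a ha.2
    _ ≤ K * (δ * dist y x) := by gcongr
    _ = (K * δ) * ‖y - x‖ := by rw [dist_eq_norm]; ring
    _ ≤ c * ‖y - x‖ := by gcongr

end AddHaar

theorem hasFDerivAt_iff_of_hasFDerivAt_sub_zero {𝕜 E F : Type*} [NontriviallyNormedField 𝕜]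
    [NormedAddCommGroup E] [NormedSpace 𝕜 E] [NormedAddCommGroup F] [NormedSpace 𝕜 F]
    {f g : E → F} {x : E} (hfg : HasFDerivAt (f - g) (0 : E →L[𝕜] F) x) {L : E →L[𝕜] F} :
    HasFDerivAt f L x ↔ HasFDerivAt g L x :=
  ⟨fun hf => by simpa using hf.sub hfg, fun hg => by simpa using hg.add hfg⟩

theorem stmt7_general {X Y : Type*} [NormedAddCommGroup X] [NormedSpace ℝ X]
    [FiniteDimensional ℝ X] [MeasurableSpace X] [BorelSpace X]
    [NormedAddCommGroup Y] [NormedSpace ℝ Y]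
    (μ : Measure X) [μ.IsAddHaarMeasure]
    (H : Set X) (f g : X → Y)
    (hf : ∀ x ∈ H, ∃ (K : NNReal) (ε : ℝ), 0 < ε ∧ ball x ε ⊆ H ∧
      LipschitzOnWith K f (ball x ε))
    (hg : ∀ x ∈ H, ∃ (K : NNReal) (ε : ℝ), 0 < ε ∧ ball x ε ⊆ H ∧
      LipschitzOnWith K g (ball x ε))
    (x : X) (hx : x ∈ H)
    (hdensity : Tendsto
      (fun r : ℝ => μ ({y ∈ H | f y = g y} ∩ closedBall x r) / μ (closedBall x r))
      (𝓝[>] (0 : ℝ)) (𝓝 1)) :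
    ∀ L : X →L[ℝ] Y, HasFDerivAt f L x ↔ HasFDerivAt g L x := by
  intro L
  obtain ⟨Kf, εf, hεf, -, hfK⟩ := hf x hx
  obtain ⟨Kg, εg, hεg, -, hgK⟩ := hg x hx
  have hlip : LipschitzOnWith (Kf + Kg) (f - g) (ball x (min εf εg)) :=
    (hfK.mono (ball_subset_ball (min_le_left _ _))).sub
      (hgK.mono (ball_subset_ball (min_le_right _ _)))
  refine hasFDerivAt_iff_of_hasFDerivAt_sub_zero
    (hlip.hasFDerivAt_zero_of_isDensityPoint (ball_mem_nhds x (lt_min hεf hεg)) hdensity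
      ?_)
  rintro y ⟨⟨-, hfgy⟩, -⟩
  exact sub_eq_zero.mpr hfgy

/-- At a Lebesgue density point of the agreement set of two locally Lipschitz maps,
one is Fréchet differentiable iff the other is, with the same derivative. -/
theorem stmt7 {X Y : Type*} [NormedAddCommGroup X] [NormedSpace ℝ X]
    [FiniteDimensional ℝ X] [MeasurableSpace X] [BorelSpace X]
    [NormedAddCommGroup Y] [NormedSpace ℝ Y]
    (μ : Measure X) [μ.IsAddHaarMeasure]
    (H : Set X) (hH : IsOpen H) (f g : X → Y)
    (hf : ∀ x ∈ H, ∃ (K : NNReal) (ε : ℝ), 0 < ε ∧ ball x ε ⊆ H ∧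
      LipschitzOnWith K f (ball x ε))
    (hg : ∀ x ∈ H, ∃ (K : NNReal) (ε : ℝ), 0 < ε ∧ ball x ε ⊆ H ∧
      LipschitzOnWith K g (ball x ε))
    (x : X) (hx : x ∈ H)
    (hdensity : Tendsto
      (fun r : ℝ => μ ({y ∈ H | f y = g y} ∩ closedBall x r) / μ (closedBall x r))
      (𝓝[>] (0 : ℝ)) (𝓝 1)) :
    ∀ L : X →L[ℝ] Y, HasFDerivAt f L x ↔ HasFDerivAt g L x :=
  stmt7_general μ H f g hf hg x hx hdensity
end

section
/- Let X and Y be finite-dimensional normed spaces, H ⊆ X open, f, g : H → Y locally Lipschitz, and A := {x ∈ H : f(x) = g(x)}. Then for Lebesgue almost every x ∈ A, both Df(x) and Dg(x) exist and are equal. -/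
open Metric MeasureTheory

/-! By Rademacher's theorem, applied on countably many open sets covering `H` on which they are
Lipschitz, `f` and `g` are differentiable at almost every point of `H`; by Lebesgue's density theorem, almost every point of
`A` is a density point of `A`. At a density point, every direction is a limit of rescaled
directions into `A`, so the tangent cone of `A` is the whole space and a derivative within `A` is
unique. Since `f = g` on `A`, the derivatives of `f` and `g` there coincide. -/

open Filter Set Topology Pointwise

section DensityPoint

variable {E : Type*} [NormedAddCommGroup E] [NormedSpace ℝ E] [FiniteDimensional ℝ E]
  [MeasurableSpace E] [BorelSpace E] (μ : Measure E) [μ.IsAddHaarMeasure] {s : Set E} {x : E}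

theorem mem_tangentConeAt_of_density_one
    (h : Tendsto (fun r => μ (s ∩ closedBall x r) / μ (closedBall x r)) (𝓝[>] 0) (𝓝 1))
    (v : E) : v ∈ tangentConeAt ℝ s x := by
  rw [nhds_basis_ball.tangentConeAt_eq_biInter_closure, mem_iInter₂]
  intro ρ hρ
  rw [Metric.mem_closure_iff]
  intro δ hδ
  have hsmall : ∀ᶠ r in 𝓝[>] (0 : ℝ), r * (‖v‖ + δ) < ρ :=
    (((continuous_mul_const _).tendsto' 0 0 (zero_mul _)).mono_left nhdsWithin_le_nhds).eventually
      (gt_mem_nhds hρ)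
  obtain ⟨r, ⟨y, hys, hy⟩, hr, hrpos⟩ :=
    ((Measure.eventually_nonempty_inter_smul_of_density_one μ s x h (ball v δ) measurableSet_ball
      (measure_ball_pos μ v hδ).ne').and (hsmall.and self_mem_nhdsWithin)).exists
  rw [singleton_add, image_add_left, mem_preimage] at hy
  obtain ⟨w, hw, hwy⟩ := hy
  -- `w = r⁻¹ • (r • w)` is `δ`-close to `v`, with `r • w` in `ball 0 ρ` and `x + r • w = y ∈ s`.
  refine ⟨w, ⟨r⁻¹, mem_univ _, r • w, ⟨?_, ?_⟩, inv_smul_smul₀ hrpos.ne' w⟩, ?_⟩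
  · rw [mem_ball_zero_iff, norm_smul, Real.norm_of_nonneg hrpos.le]
    calc r * ‖w‖ ≤ r * (‖v‖ + δ) := by
          gcongr
          calc ‖w‖ ≤ ‖v‖ + dist w v := norm_le_norm_add_const_of_dist_le le_rfl
            _ ≤ ‖v‖ + δ := by linarith [mem_ball.1 hw]
      _ < ρ := hr
  · simpa [mem_preimage, hwy] using hys
  · rw [dist_comm]; exact mem_ball.1 hw

theorem uniqueDiffWithinAt_of_density_one
    (h : Tendsto (fun r => μ (s ∩ closedBall x r) / μ (closedBall x r)) (𝓝[>] 0) (𝓝 1)) :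
    UniqueDiffWithinAt ℝ s x := by
  have hcone : tangentConeAt ℝ s x = univ :=
    eq_univ_of_forall (mem_tangentConeAt_of_density_one μ h)
  refine ⟨?_, mem_closure_of_nonempty_tangentConeAt (𝕜 := ℝ) ?_⟩ <;> simp [hcone]

end DensityPoint

theorem LocallyLipschitzOn.ae_differentiableWithinAt_of_mem {E F : Type*} [NormedAddCommGroup E]
    [NormedSpace ℝ E] [FiniteDimensional ℝ E] [MeasurableSpace E] [BorelSpace E]
    [NormedAddCommGroup F] [NormedSpace ℝ F] [FiniteDimensional ℝ F]
    {μ : Measure E} [μ.IsAddHaarMeasure] {s : Set E} {f : E → F} (hf : LocallyLipschitzOn s f) :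
    ∀ᵐ x ∂μ, x ∈ s → DifferentiableWithinAt ℝ f s x := by
  have hU : ∀ z : s, ∃ U : Set E, IsOpen U ∧ (z : E) ∈ U ∧ ∃ K, LipschitzOnWith K f (U ∩ s) :=
    fun z => by
      obtain ⟨K, t, ht, hK⟩ := hf z.2
      obtain ⟨U, hUo, hzU, hUt⟩ := mem_nhdsWithin.1 ht
      exact ⟨U, hUo, hzU, K, hK.mono hUt⟩
  choose U hUo hzU hK using hU
  obtain ⟨T, hT, hTU⟩ := TopologicalSpace.isOpen_iUnion_countable U hUo
  have hae : ∀ z ∈ T, ∀ᵐ x ∂μ, x ∈ U z ∩ s → DifferentiableWithinAt ℝ f s x := fun z _ => by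
    obtain ⟨K, hK⟩ := hK z
    filter_upwards [hK.ae_differentiableWithinAt_of_mem] with x hx hxz
    exact (hx hxz).mono_of_mem_nhdsWithin (mem_nhdsWithin.2 ⟨U z, hUo z, hxz.1, subset_rfl⟩)
  filter_upwards [(ae_ball_iff hT).2 hae] with x hx hxs
  have hxU : x ∈ ⋃ z ∈ T, U z := hTU ▸ mem_iUnion.2 ⟨⟨x, hxs⟩, hzU _⟩
  obtain ⟨z, hz, hxz⟩ := mem_iUnion₂.1 hxU
  exact hx z hz ⟨hxz, hxs⟩

/-- Two locally Lipschitz maps between finite-dimensional normed spaces have, at Lebesgue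
almost every point of their agreement set, a common Fréchet derivative. -/
theorem stmt8 {X Y : Type*} [NormedAddCommGroup X] [NormedSpace ℝ X]
    [FiniteDimensional ℝ X] [MeasurableSpace X] [BorelSpace X]
    [NormedAddCommGroup Y] [NormedSpace ℝ Y] [FiniteDimensional ℝ Y]
    (μ : Measure X) [μ.IsAddHaarMeasure]
    (H : Set X) (hH : IsOpen H) (f g : X → Y)
    (hf : ∀ x ∈ H, ∃ (K : NNReal) (ε : ℝ), 0 < ε ∧ ball x ε ⊆ H ∧
      LipschitzOnWith K f (ball x ε))
    (hg : ∀ x ∈ H, ∃ (K : NNReal) (ε : ℝ), 0 < ε ∧ ball x ε ⊆ H ∧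
      LipschitzOnWith K g (ball x ε)) :
    ∀ᵐ x ∂μ, x ∈ {y ∈ H | f y = g y} →
      ∃ L : X →L[ℝ] Y, HasFDerivAt f L x ∧ HasFDerivAt g L x := by
  have hloc : ∀ φ : X → Y, (∀ x ∈ H, ∃ (K : NNReal) (ε : ℝ), 0 < ε ∧ ball x ε ⊆ H ∧
      LipschitzOnWith K φ (ball x ε)) → LocallyLipschitzOn H φ := fun φ hφ x hx => by
    obtain ⟨K, ε, hε, -, hK⟩ := hφ x hx
    exact ⟨K, ball x ε, mem_nhdsWithin_of_mem_nhds (ball_mem_nhds x hε), hK⟩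
  filter_upwards [(hloc f hf).ae_differentiableWithinAt_of_mem (μ := μ),
    (hloc g hg).ae_differentiableWithinAt_of_mem (μ := μ),
    ae_imp_of_ae_restrict (Besicovitch.ae_tendsto_measure_inter_div μ {y ∈ H | f y = g y})]
    with x hfx hgx hdens hx
  have hF := (hfx hx.1).differentiableAt (hH.mem_nhds hx.1) |>.hasFDerivAt
  have hG := (hgx hx.1).differentiableAt (hH.mem_nhds hx.1) |>.hasFDerivAt
  refine ⟨fderiv ℝ f x, hF, ?_⟩
  rwa [(uniqueDiffWithinAt_of_density_one μ (hdens hx)).eq hF.hasFDerivWithinAt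
    (hG.hasFDerivWithinAt.congr (fun y hy => hy.2) hx.2)]
end

section
/- Let X and Y be normed spaces with X finite-dimensional, H ⊆ X open, Φ : H → L(X,Y) continuous, and f : H → Y Lipschitz such that Df(x) = Φ(x) for Lebesgue almost every x ∈ H. Then f is continuously differentiable on H and Df(x) = Φ(x) for every x ∈ H. -/
/-! Averaging `f` over small balls, `f_δ z = ⨍ y in closedBall 0 δ, f (z + y)`, produces maps
whose derivative is the corresponding average of `Φ`: one may differentiate under the integral
sign because `f` is Lipschitz, and this only sees `Df = Φ` almost everywhere. As `δ → 0⁺` the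
averages of the continuous maps `f` and `Φ` converge locally uniformly to `f` and `Φ`, so the
theorem on uniform limits of derivatives gives `Df = Φ` everywhere. The Bochner integral needs a
complete target, so the general case goes through the completion of `Y`, an isometric embedding.
-/

open Metric MeasureTheory Filter Topology Set

theorem LinearIsometry.comp_hasFDerivAt_iff {𝕜 E F G : Type*} [NontriviallyNormedField 𝕜]
    [NormedAddCommGroup E] [NormedSpace 𝕜 E] [NormedAddCommGroup F] [NormedSpace 𝕜 F]
    [NormedAddCommGroup G] [NormedSpace 𝕜 G] (J : F →ₗᵢ[𝕜] G) {f : E → F} {f' : E →L[𝕜] F}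
    {x : E} : HasFDerivAt (J ∘ f) (J.toContinuousLinearMap.comp f') x ↔ HasFDerivAt f f' x := by
  simp only [hasFDerivAt_iff_isLittleO_nhds_zero,
    ← Asymptotics.isLittleO_norm_left (f' := fun h => _ - _ - _)]
  simp [← map_sub]

theorem norm_setAverage_sub_le {α E : Type*} [MeasurableSpace α] {μ : Measure α}
    [NormedAddCommGroup E] [NormedSpace ℝ E] [CompleteSpace E] {s : Set α} (hμ₀ : μ s ≠ 0)
    (hμ : μ s ≠ ⊤) {g : α → E} (hg : IntegrableOn g s μ) {c : E} {C : ℝ}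
    (hC : ∀ y ∈ s, ‖g y - c‖ ≤ C) :
    ‖⨍ y in s, g y ∂μ - c‖ ≤ C := by
  have hμ_pos : 0 < μ.real s := ENNReal.toReal_pos hμ₀ hμ
  have hsub : ⨍ y in s, g y ∂μ - c = (μ.real s)⁻¹ • ∫ y in s, (g y - c) ∂μ := by
    rw [integral_sub hg (integrableOn_const hμ), setIntegral_const, setAverage_eq, smul_sub,
      smul_smul, inv_mul_cancel₀ hμ_pos.ne', one_smul]
  calc ‖⨍ y in s, g y ∂μ - c‖ ≤ (μ.real s)⁻¹ * (C * μ.real s) := by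
        rw [hsub, norm_smul, Real.norm_of_nonneg (inv_nonneg.2 hμ_pos.le)]
        exact mul_le_mul_of_nonneg_left (norm_setIntegral_le_of_norm_le_const hμ.lt_top hC)
          (inv_nonneg.2 hμ_pos.le)
    _ = C := by field_simp

theorem add_mem_ball_of_norm_le {E : Type*} [SeminormedAddCommGroup E] {x z y : E} {a b : ℝ}
    (hz : z ∈ ball x a) (hy : ‖y‖ ≤ b) : z + y ∈ ball x (a + b) := by
  rw [mem_ball, dist_eq_norm] at hz ⊢
  rw [add_sub_right_comm]
  linarith [norm_add_le (z - x) y]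

section Smoothing

variable {X Y : Type*} [NormedAddCommGroup X] [NormedSpace ℝ X] [FiniteDimensional ℝ X]
  [MeasurableSpace X] [BorelSpace X] (μ : Measure X) [NormedAddCommGroup Y] [NormedSpace ℝ Y]

theorem ContinuousOn.tendstoUniformlyOnFilter_setAverage_closedBall [μ.IsAddHaarMeasure]
    [CompleteSpace Y] {g : X → Y} {U : Set X} {x : X} (hg : ContinuousOn g U) (hU : U ∈ 𝓝 x) :
    TendstoUniformlyOnFilter (fun δ z => ⨍ y in closedBall 0 δ, g (z + y) ∂μ) g
      (𝓝[>] 0) (𝓝 x) := by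
  rw [Metric.tendstoUniformlyOnFilter_iff]
  intro ε hε
  obtain ⟨η, hη, hηU, hgη⟩ :
      ∃ η > 0, ball x η ⊆ U ∧ ∀ w ∈ ball x η, dist (g w) (g x) < ε / 4 := by
    obtain ⟨η₁, hη₁, hη₁U⟩ := Metric.mem_nhds_iff.1 hU
    obtain ⟨η₂, hη₂, hgη₂⟩ :=
      Metric.continuousAt_iff.1 (hg.continuousAt hU) (ε / 4) (by positivity)
    exact ⟨min η₁ η₂, lt_min hη₁ hη₂, (ball_subset_ball (min_le_left _ _)).trans hη₁U,
      fun w hw => hgη₂ (lt_of_lt_of_le hw (min_le_right _ _))⟩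
  filter_upwards [prod_mem_prod (Ioo_mem_nhdsGT (half_pos hη)) (ball_mem_nhds x (half_pos hη))]
    with ⟨δ, z⟩ ⟨⟨hδ₀, hδη⟩, hzx⟩
  have hmem : ∀ y ∈ closedBall (0 : X) δ, z + y ∈ ball x η := fun y hy =>
    ball_subset_ball (by linarith) (add_mem_ball_of_norm_le hzx (mem_closedBall_zero_iff.1 hy))
  have hint : IntegrableOn (fun y => g (z + y)) (closedBall 0 δ) μ :=
    (hg.comp (by fun_prop) fun y hy => hηU (hmem y hy)).integrableOn_compact
      (isCompact_closedBall _ _)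
  rw [dist_comm, dist_eq_norm]
  refine (norm_setAverage_sub_le (measure_closedBall_pos μ 0 hδ₀).ne'
    measure_closedBall_lt_top.ne hint fun y hy => ?_).trans_lt (half_lt_self hε)
  have hzη : z ∈ ball x η := by simpa using hmem 0 (mem_closedBall_self hδ₀.le)
  rw [← dist_eq_norm]
  linarith [dist_triangle_right (g (z + y)) (g z) (g x), hgη _ (hmem y hy), hgη z hzη]

theorem LipschitzOnWith.hasFDerivAt_setAverage_comp_add [μ.IsAddLeftInvariant]
    [IsFiniteMeasureOnCompacts μ] {f : X → Y} {Φ : X → X →L[ℝ] Y}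
    {U s : Set X} {K : NNReal} (hf : LipschitzOnWith K f U) (hΦ : ContinuousOn Φ U)
    (hae : ∀ᵐ x ∂μ, x ∈ U → HasFDerivAt f (Φ x) x) (hs : IsCompact s) {x : X}
    (hx : ∀ᶠ z in 𝓝 x, ∀ y ∈ s, z + y ∈ U) :
    HasFDerivAt (fun z => ⨍ y in s, f (z + y) ∂μ) (⨍ y in s, Φ (x + y) ∂μ) x := by
  obtain ⟨ρ, hρ, hρU⟩ := Metric.eventually_nhds_iff_ball.1 hx
  have hsm : MeasurableSet s := hs.measurableSet
  have hcont : ∀ z ∈ ball x ρ, ContinuousOn (fun y => f (z + y)) s := fun z hz =>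
    hf.continuousOn.comp (by fun_prop) (hρU z hz)
  have hlip : ∀ y ∈ s, LipschitzOnWith K (fun z => f (z + y)) (ball x ρ) := fun y hy => by
    simpa only [mul_one, Function.comp_def] using
      hf.comp (isometry_add_right y).lipschitz.lipschitzOnWith fun z hz => hρU z hz y hy
  have hdiff : ∀ᵐ y ∂μ, x + y ∈ U → HasFDerivAt f (Φ (x + y)) (x + y) :=
    (measurePreserving_add_left μ x).quasiMeasurePreserving.ae hae
  have hint := hasFDerivAt_integral_of_dominated_loc_of_lip (μ := μ.restrict s)
    (F := fun z y => f (z + y)) (F' := fun y => Φ (x + y)) (bound := fun _ => (K : ℝ))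
    (ball_mem_nhds x hρ)
    (eventually_of_mem (ball_mem_nhds x hρ) fun z hz => (hcont z hz).aestronglyMeasurable hsm)
    ((hcont x (mem_ball_self hρ)).integrableOn_compact hs)
    ((hΦ.comp (by fun_prop) (hρU x (mem_ball_self hρ))).aestronglyMeasurable hsm)
    ((ae_restrict_mem hsm).mono fun y hy => by simpa using hlip y hy)
    (integrableOn_const hs.measure_lt_top.ne)
    (by
      filter_upwards [ae_restrict_of_ae hdiff, ae_restrict_mem hsm] with y hy hys
      exact (hy (hρU x (mem_ball_self hρ) y hys)).comp x ((hasFDerivAt_id x).add_const y))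
  simp only [setAverage_eq]
  exact hint.2.const_smul (μ.real s)⁻¹

theorem LipschitzOnWith.hasFDerivAt_of_ae_hasFDerivAt [μ.IsAddHaarMeasure] [CompleteSpace Y]
    {f : X → Y} {Φ : X → X →L[ℝ] Y} {H : Set X} {K : NNReal} (hf : LipschitzOnWith K f H)
    (hH : IsOpen H) (hΦ : ContinuousOn Φ H) (hae : ∀ᵐ x ∂μ, x ∈ H → HasFDerivAt f (Φ x) x)
    {x : X} (hx : x ∈ H) : HasFDerivAt f (Φ x) x := by
  obtain ⟨r, hr, hrH⟩ : ∃ r > 0, ball x (2 * r) ⊆ H := by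
    obtain ⟨ε, hε, hεH⟩ := Metric.isOpen_iff.1 hH x hx
    exact ⟨ε / 2, half_pos hε, by rwa [mul_div_cancel₀ _ two_ne_zero]⟩
  refine hasFDerivAt_of_tendstoUniformlyOnFilter (l := 𝓝[>] (0 : ℝ))
    (f := fun δ z => ⨍ y in closedBall 0 δ, f (z + y) ∂μ)
    (hΦ.tendstoUniformlyOnFilter_setAverage_closedBall μ (hH.mem_nhds hx)) ?_ ?_
  · filter_upwards [prod_mem_prod (Ioo_mem_nhdsGT hr) (ball_mem_nhds x hr)]
      with ⟨δ, z⟩ ⟨⟨_, hδr⟩, hz⟩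
    refine hf.hasFDerivAt_setAverage_comp_add μ hΦ hae (isCompact_closedBall 0 δ) ?_
    filter_upwards [isOpen_ball.mem_nhds hz] with w hw y hy
    exact hrH (ball_subset_ball (by linarith)
      (add_mem_ball_of_norm_le hw (mem_closedBall_zero_iff.1 hy)))
  · filter_upwards [hH.mem_nhds hx] with y hy
    exact (hf.continuousOn.tendstoUniformlyOnFilter_setAverage_closedBall μ
      (hH.mem_nhds hy)).tendsto_at (by simp)

end Smoothing

/-- A Lipschitz map whose Fréchet derivative equals a continuous operator-valued map `Φ`
almost everywhere on an open set `H` is `C¹` on `H` with derivative `Φ` everywhere on `H`. -/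
theorem stmt9 {X Y : Type*} [NormedAddCommGroup X] [NormedSpace ℝ X]
    [FiniteDimensional ℝ X] [MeasurableSpace X] [BorelSpace X]
    [NormedAddCommGroup Y] [NormedSpace ℝ Y]
    (μ : Measure X) [μ.IsAddHaarMeasure]
    (H : Set X) (hH : IsOpen H)
    (Φ : X → (X →L[ℝ] Y)) (hΦ : ContinuousOn Φ H)
    (f : X → Y) (K : NNReal) (hf : LipschitzOnWith K f H)
    (hae : ∀ᵐ x ∂μ, x ∈ H → HasFDerivAt f (Φ x) x) :
    ∀ x ∈ H, HasFDerivAt f (Φ x) x := by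
  intro x hx
  let J : Y →ₗᵢ[ℝ] UniformSpace.Completion Y := UniformSpace.Completion.toComplₗᵢ
  have hJf : LipschitzOnWith K (J ∘ f) H := by
    simpa only [one_mul] using J.lipschitz.comp_lipschitzOnWith hf
  have hJΦ : ContinuousOn (fun z => J.toContinuousLinearMap.comp (Φ z)) H :=
    (ContinuousLinearMap.compL ℝ X Y _ J.toContinuousLinearMap).continuous.comp_continuousOn hΦ
  refine J.comp_hasFDerivAt_iff.1 (hJf.hasFDerivAt_of_ae_hasFDerivAt μ hH hJΦ ?_ hx)
  exact hae.mono fun z hz hzH => J.comp_hasFDerivAt_iff.2 (hz hzH)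
end

section
/- Let X and Y be normed spaces, U ⊆ Q ⊆ X with U open and Q closed, and let f : Q → Y be continuous, locally L-Lipschitz on U, and Lipschitz on Q \ U. Then f is Lipschitz on Q with Lip(f) ≤ max{L, Lip(f restricted to Q \ U)}. -/
open Metric Set Filter Topology
open scoped NNReal

/-!
Restricting `f` to the line through two points of `Q` reduces the statement to maps on `ℝ`.
There, between `s < t`, let `a` and `b` be the first and the last point outside `U`. A map
locally `L`-Lipschitz on an open interval is `L`-Lipschitz on it, and by continuity on its
closure, so `f` is `L`-Lipschitz on `[s, a]` and on `[b, t]`; these intervals lie in `Q` because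
`Q` is closed. Finally `a, b ∈ Q \ U`, so `dist (f a) (f b) ≤ M (b - a)`.
-/

/-- Unlike Mathlib's `LocallyLipschitzOn`, the constant is uniform and the neighbourhoods are
taken in the whole space. -/
def LocallyLipschitzOnWith {α β : Type*} [PseudoEMetricSpace α] [PseudoEMetricSpace β]
    (K : ℝ≥0) (f : α → β) (s : Set α) : Prop :=
  ∀ x ∈ s, ∃ t ∈ 𝓝 x, LipschitzOnWith K f t

theorem lipschitzOnWith_iff_dist_le_mul_sub {Y : Type*} [PseudoMetricSpace Y] {K : ℝ≥0}
    {φ : ℝ → Y} {s : Set ℝ} :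
    LipschitzOnWith K φ s ↔ ∀ p ∈ s, ∀ q ∈ s, p ≤ q → dist (φ p) (φ q) ≤ K * (q - p) := by
  have hdist : ∀ p q : ℝ, p ≤ q → dist p q = q - p := fun p q hpq => by
    rw [Real.dist_eq, abs_of_nonpos (sub_nonpos.2 hpq), neg_sub]
  refine ⟨fun h p hp q hq hpq => hdist p q hpq ▸ h.dist_le_mul p hp q hq, fun h => ?_⟩
  refine LipschitzOnWith.of_dist_le_mul fun p hp q hq => ?_
  rcases le_total p q with hpq | hqp
  · exact hdist p q hpq ▸ h p hp q hq hpq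
  · rw [dist_comm, dist_comm p]
    exact hdist q p hqp ▸ h q hq p hp hqp

namespace LocallyLipschitzOnWith

section General

variable {α β γ : Type*} [PseudoEMetricSpace α] [PseudoEMetricSpace β] [PseudoEMetricSpace γ]
  {K : ℝ≥0} {f : β → γ} {s t : Set β}

theorem mono (h : LocallyLipschitzOnWith K f s) (hts : t ⊆ s) : LocallyLipschitzOnWith K f t :=
  fun x hx => h x (hts hx)

theorem comp_lipschitzWith {Kg : ℝ≥0} {g : α → β} (h : LocallyLipschitzOnWith K f s)
    (hg : LipschitzWith Kg g) : LocallyLipschitzOnWith (K * Kg) (f ∘ g) (g ⁻¹' s) := by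
  intro x hx
  obtain ⟨N, hN, hlip⟩ := h (g x) hx
  exact ⟨g ⁻¹' N, hg.continuous.continuousAt.preimage_mem_nhds hN,
    hlip.comp hg.lipschitzOnWith (mapsTo_preimage g N)⟩

end General

variable {Y : Type*} [PseudoMetricSpace Y] {C : ℝ≥0} {φ : ℝ → Y}

theorem dist_le_mul_sub_of_Icc {a b : ℝ} (hφ : ContinuousOn φ (Icc a b))
    (h : LocallyLipschitzOnWith C φ (Ico a b)) :
    ∀ t ∈ Icc a b, dist (φ t) (φ a) ≤ C * (t - a) := by
  refine image_le_of_liminf_slope_right_le_deriv_boundary (by fun_prop)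
    (by simp) (by fun_prop) (B' := fun _ => C)
    (fun t _ => by simpa using (((hasDerivAt_id t).sub_const a).const_mul (C : ℝ)).hasDerivWithinAt)
    fun t ht r hr => ?_
  obtain ⟨N, hN, hlip⟩ := h t ht
  refine Eventually.frequently ?_
  filter_upwards [self_mem_nhdsWithin, nhdsWithin_le_nhds hN] with z (hz : t < z) hzN
  rw [slope_def_field, div_lt_iff₀ (sub_pos.2 hz)]
  calc dist (φ z) (φ a) - dist (φ t) (φ a) ≤ dist (φ z) (φ t) := by
        linarith [dist_triangle (φ z) (φ t) (φ a)]
    _ ≤ C * dist z t := hlip.dist_le_mul z hzN t (mem_of_mem_nhds hN)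
    _ = C * (z - t) := by rw [Real.dist_eq, abs_of_pos (sub_pos.2 hz)]
    _ < r * (z - t) := by gcongr

theorem lipschitzOnWith_of_ordConnected {s : Set ℝ} (hs : s.OrdConnected)
    (h : LocallyLipschitzOnWith C φ s) : LipschitzOnWith C φ s := by
  have hφ : ContinuousOn φ s := fun t ht =>
    let ⟨_, hN, hlip⟩ := h t ht
    (hlip.continuousOn.continuousAt hN).continuousWithinAt
  refine lipschitzOnWith_iff_dist_le_mul_sub.2 fun p hp q hq hpq => ?_
  have hpq_sub : Icc p q ⊆ s := hs.out hp hq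
  rw [dist_comm]
  exact (h.mono (Ico_subset_Icc_self.trans hpq_sub)).dist_le_mul_sub_of_Icc (hφ.mono hpq_sub) q
    ⟨hpq, le_rfl⟩

theorem lipschitzOnWith_Icc {a b : ℝ} (hφ : ContinuousOn φ (Icc a b))
    (h : LocallyLipschitzOnWith C φ (Ioo a b)) : LipschitzOnWith C φ (Icc a b) := by
  rcases lt_or_ge a b with hab | hba
  · rw [← closure_Ioo hab.ne] at hφ ⊢
    exact (h.lipschitzOnWith_of_ordConnected ordConnected_Ioo).closure hφ
  · exact LipschitzOnWith.of_dist_le_mul fun p hp q hq => by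
      simp [subsingleton_Icc_of_ge hba hp hq]

end LocallyLipschitzOnWith

theorem IsClosed.Icc_subset_of_Ioo_subset {S : Set ℝ} (hS : IsClosed S) {a b : ℝ}
    (h : Ioo a b ⊆ S) (hab : a ∈ S ∨ b ∈ S) : Icc a b ⊆ S := by
  rcases lt_or_ge a b with hlt | hge
  · rw [← closure_Ioo hlt.ne]
    exact closure_minimal h hS
  · intro u hu
    obtain ⟨rfl, rfl⟩ : a = u ∧ u = b := ⟨by linarith [hu.1, hu.2], by linarith [hu.1, hu.2]⟩
    exact hab.elim id id

section RealLine

variable {Y : Type*} [PseudoMetricSpace Y] {φ : ℝ → Y} {S V : Set ℝ} {C D : ℝ≥0}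

theorem dist_le_max_mul_sub_of_locallyLipschitzOnWith_of_diff (hS : IsClosed S) (hV : IsOpen V)
    (hVS : V ⊆ S) (hφ : ContinuousOn φ S) (hloc : LocallyLipschitzOnWith C φ V)
    (hout : LipschitzOnWith D φ (S \ V)) {s t : ℝ} (hs : s ∈ S) (ht : t ∈ S) (hst : s ≤ t) :
    dist (φ s) (φ t) ≤ max C D * (t - s) := by
  have hC : (C : ℝ) ≤ max C D := by exact_mod_cast le_max_left C D
  have hD : (D : ℝ) ≤ max C D := by exact_mod_cast le_max_right C D
  set T := Icc s t \ V
  rcases T.eq_empty_or_nonempty with hT | hT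
  · have hst_sub : Icc s t ⊆ V := sdiff_eq_empty.1 hT
    calc dist (φ s) (φ t) ≤ C * (t - s) :=
          lipschitzOnWith_iff_dist_le_mul_sub.1
            ((hloc.mono hst_sub).lipschitzOnWith_of_ordConnected ordConnected_Icc)
            s ⟨le_rfl, hst⟩ t ⟨hst, le_rfl⟩ hst
      _ ≤ max C D * (t - s) := by gcongr
  have hTc : IsClosed T := isClosed_Icc.sdiff hV
  have hTb : BddBelow T := bddBelow_Icc.mono sdiff_subset
  have hTa : BddAbove T := bddAbove_Icc.mono sdiff_subset
  set a := sInf T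
  set b := sSup T
  have ha : a ∈ T := hTc.csInf_mem hT hTb
  have hb : b ∈ T := hTc.csSup_mem hT hTa
  have hab : a ≤ b := csInf_le_csSup hT hTb hTa
  have hsa : Ioo s a ⊆ V := fun u hu => by_contra fun hu' =>
    hu.2.not_ge (csInf_le hTb ⟨⟨hu.1.le, hu.2.le.trans ha.1.2⟩, hu'⟩)
  have hbt : Ioo b t ⊆ V := fun u hu => by_contra fun hu' =>
    hu.1.not_ge (le_csSup hTa ⟨⟨hb.1.1.trans hu.1.le, hu.2.le⟩, hu'⟩)
  have hSa : Icc s a ⊆ S := hS.Icc_subset_of_Ioo_subset (hsa.trans hVS) (.inl hs)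
  have hSb : Icc b t ⊆ S := hS.Icc_subset_of_Ioo_subset (hbt.trans hVS) (.inr ht)
  have hφsa : dist (φ s) (φ a) ≤ C * (a - s) :=
    lipschitzOnWith_iff_dist_le_mul_sub.1 ((hloc.mono hsa).lipschitzOnWith_Icc (hφ.mono hSa))
      s ⟨le_rfl, ha.1.1⟩ a ⟨ha.1.1, le_rfl⟩ ha.1.1
  have hφab : dist (φ a) (φ b) ≤ D * (b - a) :=
    lipschitzOnWith_iff_dist_le_mul_sub.1 hout
      a ⟨hSa ⟨ha.1.1, le_rfl⟩, ha.2⟩ b ⟨hSb ⟨le_rfl, hb.1.2⟩, hb.2⟩ hab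
  have hφbt : dist (φ b) (φ t) ≤ C * (t - b) :=
    lipschitzOnWith_iff_dist_le_mul_sub.1 ((hloc.mono hbt).lipschitzOnWith_Icc (hφ.mono hSb))
      b ⟨le_rfl, hb.1.2⟩ t ⟨hb.1.2, le_rfl⟩ hb.1.2
  calc dist (φ s) (φ t) ≤ dist (φ s) (φ a) + dist (φ a) (φ b) + dist (φ b) (φ t) :=
        dist_triangle4 _ _ _ _
    _ ≤ max C D * (a - s) + max C D * (b - a) + max C D * (t - b) := by
        gcongr
        · linarith [hφsa, mul_le_mul_of_nonneg_right hC (sub_nonneg.2 ha.1.1)]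
        · linarith [hφab, mul_le_mul_of_nonneg_right hD (sub_nonneg.2 hab)]
        · linarith [hφbt, mul_le_mul_of_nonneg_right hC (sub_nonneg.2 hb.1.2)]
    _ = max C D * (t - s) := by ring

theorem lipschitzOnWith_max_of_locallyLipschitzOnWith_of_diff (hS : IsClosed S) (hV : IsOpen V)
    (hVS : V ⊆ S) (hφ : ContinuousOn φ S) (hloc : LocallyLipschitzOnWith C φ V)
    (hout : LipschitzOnWith D φ (S \ V)) : LipschitzOnWith (max C D) φ S :=
  lipschitzOnWith_iff_dist_le_mul_sub.2 fun _ hs _ ht hst =>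
    dist_le_max_mul_sub_of_locallyLipschitzOnWith_of_diff hS hV hVS hφ hloc hout hs ht hst

end RealLine

/-- A continuous map that is locally `L`-Lipschitz on an open `U ⊆ Q` and Lipschitz on
`Q \ U` is Lipschitz on the closed set `Q` with constant `max L (Lip(f|_{Q\U}))`. -/
theorem stmt11 {X Y : Type*} [NormedAddCommGroup X] [NormedSpace ℝ X]
    [NormedAddCommGroup Y] [NormedSpace ℝ Y]
    (U Q : Set X) (hUQ : U ⊆ Q) (hU : IsOpen U) (hQ : IsClosed Q)
    (f : X → Y) (hcont : ContinuousOn f Q)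
    (L M : NNReal)
    (hloc : ∀ x ∈ U, ∃ ε : ℝ, 0 < ε ∧ ball x ε ⊆ U ∧ LipschitzOnWith L f (ball x ε))
    (hout : LipschitzOnWith M f (Q \ U)) :
    LipschitzOnWith (max L M) f Q := by
  have hlocU : LocallyLipschitzOnWith L f U := fun x hx =>
    let ⟨ε, hε, _, hlip⟩ := hloc x hx
    ⟨ball x ε, ball_mem_nhds x hε, hlip⟩
  refine LipschitzOnWith.of_dist_le_mul fun x hx y hy => ?_
  set g : ℝ → X := (AffineMap.lineMap x y : ℝ → X)
  have hg : LipschitzWith (nndist x y) g := lipschitzWith_lineMap x y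
  have hfg : LipschitzOnWith (max (L * nndist x y) (M * nndist x y)) (f ∘ g) (g ⁻¹' Q) :=
    lipschitzOnWith_max_of_locallyLipschitzOnWith_of_diff (hQ.preimage hg.continuous)
      (hU.preimage hg.continuous) (preimage_mono hUQ)
      (hcont.comp hg.continuous.continuousOn (mapsTo_preimage g Q))
      (hlocU.comp_lipschitzWith hg) (hout.comp hg.lipschitzOnWith (mapsTo_preimage g (Q \ U)))
  have := hfg.dist_le_mul 0 (by simpa [g] using hx) 1 (by simpa [g] using hy)
  simpa [g, max_mul_mul_right] using this
end

section
/- Let X and Y be normed spaces, E ⊆ U ⊆ Q ⊆ X with E compact and U open, η > 0, and g : Q → Y a mapping whose restriction to U is C¹. Then there exists δ ∈ (0, η) such that for every mapping h : Q → Y with sup_{z ∈ Q} ‖h(z) − g(z)‖ ≤ ηδ/4, every x ∈ E and every y ∈ X with ‖y‖ ≤ δ, one has ‖h(x+y) − h(x) − Dg(x)(y)‖ ≤ ηδ. -/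
open Metric Set

/-- Any map uniformly close to a map `g` which is `C¹` on an open neighbourhood of a
compact set `E` has difference quotients near `E` controlled by the derivative of `g`. -/
theorem stmt13 {X Y : Type*} [NormedAddCommGroup X] [NormedSpace ℝ X]
    [NormedAddCommGroup Y] [NormedSpace ℝ Y]
    (E U Q : Set X) (hEU : E ⊆ U) (hUQ : U ⊆ Q) (hE : IsCompact E) (hU : IsOpen U)
    (η : ℝ) (hη : 0 < η)
    (g : X → Y) (g' : X → (X →L[ℝ] Y))
    (hg : ∀ x ∈ U, HasFDerivAt g (g' x) x) (hg' : ContinuousOn g' U) :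
    ∃ δ ∈ Ioo (0 : ℝ) η, ∀ h : X → Y,
      (∀ z ∈ Q, ‖h z - g z‖ ≤ η * δ / 4) →
      ∀ x ∈ E, ∀ y : X, ‖y‖ ≤ δ →
        ‖h (x + y) - h x - g' x y‖ ≤ η * δ := by
  classical
  have key : ∀ x ∈ E, ∃ r > 0, ball x (2 * r) ⊆ U ∧
      ∀ z ∈ ball x (2 * r), ‖g' z - g' x‖ ≤ η / 8 := by
    intro x hx
    have hcx : ContinuousAt g' x := hg'.continuousAt (hU.mem_nhds (hEU hx))
    rcases Metric.continuousAt_iff.1 hcx (η / 8) (by positivity) with ⟨r1, hr1, hball⟩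
    rcases Metric.isOpen_iff.1 hU x (hEU hx) with ⟨r2, hr2, hUb⟩
    refine ⟨min r1 r2 / 2, by positivity, ?_, ?_⟩
    · intro z hz
      apply hUb
      have hz' : dist z x < 2 * (min r1 r2 / 2) := hz
      have : dist z x < min r1 r2 := by linarith
      exact lt_of_lt_of_le this (min_le_right _ _)
    · intro z hz
      have hz' : dist z x < 2 * (min r1 r2 / 2) := hz
      have h1 : dist z x < r1 := lt_of_lt_of_le (by linarith) (min_le_left _ _)
      have := hball h1
      rw [dist_eq_norm] at this
      exact this.le
  choose! r hr0 hrU hrg using key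
  rcases hE.elim_nhds_subcover (fun x => ball x (r x))
      (fun x hx => ball_mem_nhds x (hr0 x hx)) with ⟨t, htE, hcov⟩
  set δ : ℝ := min (η / 2) (if ht : t.Nonempty then t.inf' ht r else 1) with hδdef
  have hδη : δ ≤ η / 2 := min_le_left _ _
  have hδ0 : 0 < δ := by
    refine lt_min (by positivity) ?_
    split_ifs with ht
    · exact (Finset.lt_inf'_iff ht).2 fun b hb => hr0 b (htE b hb)
    · norm_num
  refine ⟨δ, ⟨hδ0, by linarith⟩, ?_⟩
  intro h hh x hx y hy
  obtain ⟨i, hit, hxi⟩ : ∃ i ∈ t, x ∈ ball i (r i) := by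
    simpa using hcov hx
  have hiE : i ∈ E := htE i hit
  have hδr : δ ≤ r i := by
    have ht : t.Nonempty := ⟨i, hit⟩
    have : δ ≤ t.inf' ht r := by
      rw [hδdef, dif_pos ht]; exact min_le_right _ _
    exact this.trans (Finset.inf'_le r hit)
  have hxs : x ∈ ball i (2 * r i) := by
    refine mem_ball.2 (lt_of_lt_of_le (mem_ball.1 hxi) ?_)
    nlinarith [hr0 i hiE]
  have hxys : x + y ∈ ball i (2 * r i) := by
    have h1 : dist (x + y) x = ‖y‖ := by
      rw [dist_eq_norm, add_sub_cancel_left]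
    have h2 : dist (x + y) i ≤ dist (x + y) x + dist x i := dist_triangle _ _ _
    have h3 : dist x i < r i := mem_ball.1 hxi
    rw [mem_ball]
    calc dist (x + y) i ≤ ‖y‖ + dist x i := by rw [← h1]; exact h2
      _ < δ + r i := by linarith
      _ ≤ 2 * r i := by linarith
  have hxU : x ∈ U := hEU hx
  have hxyU : x + y ∈ U := hrU i hiE hxys
  -- mean value estimate
  have hmvt : ‖g (x + y) - g x - g' x y‖ ≤ η / 4 * ‖y‖ := by
    have hconv : Convex ℝ (ball i (2 * r i)) := convex_ball _ _
    have hder : ∀ z ∈ ball i (2 * r i),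
        HasFDerivWithinAt (fun z => g z - g' x z) (g' z - g' x) (ball i (2 * r i)) z :=
      fun z hz => ((hg z (hrU i hiE hz)).sub (g' x).hasFDerivAt).hasFDerivWithinAt
    have hbound : ∀ z ∈ ball i (2 * r i), ‖g' z - g' x‖ ≤ η / 4 := by
      intro z hz
      have h1 : ‖g' z - g' i‖ ≤ η / 8 := hrg i hiE z hz
      have h2 : ‖g' x - g' i‖ ≤ η / 8 := hrg i hiE x hxs
      calc ‖g' z - g' x‖ ≤ ‖g' z - g' i‖ + ‖g' i - g' x‖ := norm_sub_le_norm_sub_add_norm_sub _ _ _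
        _ ≤ η / 8 + η / 8 := by rw [norm_sub_rev (g' i)]; linarith
        _ = η / 4 := by ring
    have := hconv.norm_image_sub_le_of_norm_hasFDerivWithin_le hder hbound hxs hxys
    have heq : g (x + y) - g' x (x + y) - (g x - g' x x) = g (x + y) - g x - g' x y := by
      rw [map_add]; abel
    rw [heq, add_sub_cancel_left] at this
    exact this
  have hb1 : ‖h (x + y) - g (x + y)‖ ≤ η * δ / 4 := hh _ (hUQ hxyU)
  have hb2 : ‖h x - g x‖ ≤ η * δ / 4 := hh _ (hUQ hxU)
  have hb3 : ‖g (x + y) - g x - g' x y‖ ≤ η * δ / 4 := by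
    calc ‖g (x + y) - g x - g' x y‖ ≤ η / 4 * ‖y‖ := hmvt
      _ ≤ η / 4 * δ := by gcongr
      _ = η * δ / 4 := by ring
  have heq2 : h (x + y) - h x - g' x y =
      (h (x + y) - g (x + y)) + (g x - h x) + (g (x + y) - g x - g' x y) := by abel
  calc ‖h (x + y) - h x - g' x y‖
      = ‖(h (x + y) - g (x + y)) + (g x - h x) + (g (x + y) - g x - g' x y)‖ := by rw [heq2]
    _ ≤ ‖h (x + y) - g (x + y)‖ + ‖g x - h x‖ + ‖g (x + y) - g x - g' x y‖ := norm_add₃_le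
    _ ≤ η * δ / 4 + η * δ / 4 + η * δ / 4 := by
        rw [norm_sub_rev (g x)]; linarith
    _ ≤ η * δ := by nlinarith [mul_pos hη hδ0]
end
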